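/- For any family S of linear subspaces of X, the algebra E_S(X) is invariant under translations: if f ∈ E_S(X) and a ∈ X, then the translate x ↦ f(x + a) also belongs to E_S(X). -/

import Mathlib

open MeasureTheory Metric Filter Topology

noncomputable section

/-- `X d` is the Euclidean space `ℝ^d` with its standard inner product and norm. -/
abbrev X (d : ℕ) : Type := EuclideanSpace ℝ (Fin d)

/-- `h` is a boundary function for `f` : `f` has uniform radial limits at infinity given
(on the unit sphere) by the continuous function `h`. -/
def IsBoundary {E : Type*} [NormedAddCommGroup E] [InnerProductSpace ℝ E]
    (f : E → ℂ) (h : E → ℂ) : Prop :=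
  Continuous h ∧
    ∀ ε > 0, ∃ r > 0, ∀ z : E, r ≤ ‖z‖ → ‖f z - h (‖z‖⁻¹ • z)‖ < ε

/-- `f` has uniform radial limits at infinity. -/
def HasUniformRadialLimits {E : Type*} [NormedAddCommGroup E] [InnerProductSpace ℝ E]
    (f : E → ℂ) : Prop :=
  ∃ h : E → ℂ, IsBoundary f h

/-- The generating set of the algebra `E_S(X)` : functions of the form `g ∘ π_Y` with `Y ∈ S`
and `g` a bounded continuous function on `Y^⊥` having uniform radial limits at infinity. -/
def projGen {E : Type*} [NormedAddCommGroup E] [InnerProductSpace ℝ E]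
    [FiniteDimensional ℝ E] (S : Set (Submodule ℝ E)) :
    Set (BoundedContinuousFunction E ℂ) :=
  { f | ∃ Y ∈ S, ∃ g : BoundedContinuousFunction (↥Yᗮ) ℂ,
      HasUniformRadialLimits ⇑g ∧ ∀ x : E, f x = g (Submodule.orthogonalProjection Yᗮ x) }

/-- `E_S(X)` : the smallest closed unital *-subalgebra of `C_b(X)` containing all `g ∘ π_Y`
with `Y ∈ S` and `g` having uniform radial limits at infinity. -/
def ES {E : Type*} [NormedAddCommGroup E] [InnerProductSpace ℝ E]
    [FiniteDimensional ℝ E] (S : Set (Submodule ℝ E)) :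
    StarSubalgebra ℂ (BoundedContinuousFunction E ℂ) :=
  (StarAlgebra.adjoin ℂ (projGen S)).topologicalClosure

/-!
Translation by `a` is a continuous star-algebra endomorphism of `C_b(X)`, so it preserves `E_S(X)`
as soon as it maps generators to generators. Since `π_Y (x + a) = π_Y x + π_Y a`, the translate of
`g ∘ π_Y` is `g (· + π_Y a) ∘ π_Y`, and translating `g` does not change its radial limits:
`(z + b) / ‖z + b‖` and `z / ‖z‖` differ by at most `2‖b‖ / ‖z + b‖`, and the boundary function is
uniformly continuous on the compact unit sphere.
-/

open Filter Bornology Uniformity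
open scoped BoundedContinuousFunction

section Normalize

variable {E : Type*} [NormedAddCommGroup E] [NormedSpace ℝ E]

theorem norm_mul_norm_smul_inv_norm_sub_le (x y : E) :
    ‖x‖ * ‖‖x‖⁻¹ • x - ‖y‖⁻¹ • y‖ ≤ 2 * ‖x - y‖ := by
  have key : ‖x‖ • (‖x‖⁻¹ • x - ‖y‖⁻¹ • y) = (x - y) + (‖y‖ - ‖x‖) • ‖y‖⁻¹ • y := by
    rcases eq_or_ne x 0 with rfl | hx
    · rcases eq_or_ne y 0 with rfl | hy
      · simp
      · simp [smul_smul, hy]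
    · rcases eq_or_ne y 0 with rfl | hy
      · simp [smul_smul, hx]
      · match_scalars <;> field_simp; ring
  have unit_le_one : ‖‖y‖⁻¹ • y‖ ≤ 1 := by
    rcases eq_or_ne y 0 with rfl | hy
    · simp
    · simp [norm_smul, hy]
  calc ‖x‖ * ‖‖x‖⁻¹ • x - ‖y‖⁻¹ • y‖ = ‖(x - y) + (‖y‖ - ‖x‖) • ‖y‖⁻¹ • y‖ := by
        rw [← key, norm_smul, Real.norm_of_nonneg (norm_nonneg x)]
    _ ≤ ‖x - y‖ + |‖y‖ - ‖x‖| * 1 := by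
        grw [norm_add_le, norm_smul, Real.norm_eq_abs, unit_le_one]
    _ ≤ 2 * ‖x - y‖ := by
        grw [abs_norm_sub_norm_le y x, norm_sub_rev y x]; linarith

theorem tendsto_smul_inv_norm_add_sub_smul_inv_norm (b : E) :
    Tendsto (fun z => ‖z + b‖⁻¹ • (z + b) - ‖z‖⁻¹ • z) (cobounded E) (𝓝 0) := by
  have norm_add_tendsto : Tendsto (fun z => ‖z + b‖) (cobounded E) atTop :=
    tendsto_norm_cobounded_atTop.comp (tendsto_add_const_cobounded b)
  refine squeeze_zero_norm' ?_ (tendsto_const_nhds (x := 2 * ‖b‖).div_atTop norm_add_tendsto)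
  filter_upwards [norm_add_tendsto.eventually_gt_atTop 0] with z hz
  rw [le_div_iff₀ hz, mul_comm]
  simpa using norm_mul_norm_smul_inv_norm_sub_le (z + b) z

end Normalize

theorem UniformContinuousOn.tendsto_dist_comp {α E F : Type*} [PseudoMetricSpace E]
    [PseudoMetricSpace F] {s : Set E} {h : E → F} (hh : UniformContinuousOn h s) {l : Filter α}
    {u v : α → E} (hu : ∀ᶠ x in l, u x ∈ s) (hv : ∀ᶠ x in l, v x ∈ s)
    (huv : Tendsto (fun x => dist (u x) (v x)) l (𝓝 0)) :
    Tendsto (fun x => dist (h (u x)) (h (v x))) l (𝓝 0) := by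
  have huv' : Tendsto (fun x => (u x, v x)) l (𝓤 E ⊓ 𝓟 (s ×ˢ s)) := by
    refine tendsto_inf.2 ⟨?_, tendsto_principal.2 (hu.and hv)⟩
    rw [Metric.uniformity_eq_comap_nhds_zero]
    exact tendsto_comap_iff.2 huv
  have hcomp := Tendsto.comp hh huv'
  rw [Metric.uniformity_eq_comap_nhds_zero] at hcomp
  exact tendsto_comap_iff.1 hcomp

section Boundary

variable {E : Type*} [NormedAddCommGroup E] [InnerProductSpace ℝ E]

theorem isBoundary_iff_tendsto {f h : E → ℂ} :
    IsBoundary f h ↔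
      Continuous h ∧ Tendsto (fun z => f z - h (‖z‖⁻¹ • z)) (cobounded E) (𝓝 0) := by
  have basis : (cobounded E).HasBasis (fun r : ℝ => 0 < r) (fun r => {z | r ≤ ‖z‖}) := by
    rw [← comap_norm_atTop]
    refine (atTop_basis.to_hasBasis (fun r _ => ⟨max r 1, by positivity, ?_⟩)
      fun r _ => ⟨r, trivial, subset_rfl⟩).comap _
    exact Set.Ici_subset_Ici.2 (le_max_left _ _)
  rw [IsBoundary, basis.tendsto_iff Metric.nhds_basis_ball]
  simp [dist_zero_right]

theorem IsBoundary.comp_add_right [ProperSpace E] {g h : E → ℂ} (hb : IsBoundary g h) (b : E) :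
    IsBoundary (fun z => g (z + b)) h := by
  rw [isBoundary_iff_tendsto] at hb ⊢
  obtain ⟨hh, hg⟩ := hb
  refine ⟨hh, ?_⟩
  have hg' := hg.comp (tendsto_add_const_cobounded b)
  have hsphere : UniformContinuousOn h (sphere (0 : E) 1) :=
    (isCompact_sphere 0 1).uniformContinuousOn_of_continuous hh.continuousOn
  have hunit : ∀ᶠ z in cobounded E, ‖z‖⁻¹ • z ∈ sphere (0 : E) 1 := by
    filter_upwards [eventually_ne_cobounded 0] with z hz
    simp [norm_smul, hz]
  have hclose := hsphere.tendsto_dist_comp (u := fun z => ‖z + b‖⁻¹ • (z + b))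
    (v := fun z => ‖z‖⁻¹ • z) ((tendsto_add_const_cobounded b).eventually hunit) hunit
    (by simpa only [dist_eq_norm] using
      tendsto_zero_iff_norm_tendsto_zero.1 (tendsto_smul_inv_norm_add_sub_smul_inv_norm b))
  simp only [dist_eq_norm] at hclose
  simpa only [Function.comp_def, sub_add_sub_cancel, add_zero] using
    hg'.add (tendsto_zero_iff_norm_tendsto_zero.2 hclose)

theorem HasUniformRadialLimits.comp_add_right [ProperSpace E] {g : E → ℂ}
    (hg : HasUniformRadialLimits g) (b : E) : HasUniformRadialLimits (fun z => g (z + b)) :=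
  let ⟨h, hh⟩ := hg; ⟨h, hh.comp_add_right b⟩

end Boundary

namespace BoundedContinuousFunction

variable (𝕜 : Type*) {α γ R : Type*} [TopologicalSpace α] [TopologicalSpace γ] [NormedField 𝕜]
  [NormedRing R] [NormedAlgebra 𝕜 R] [StarRing R] [NormedStarGroup R]

def compContinuousStarAlgHom (g : C(γ, α)) : (α →ᵇ R) →⋆ₐ[𝕜] (γ →ᵇ R) where
  toFun f := f.compContinuous g
  map_one' := rfl
  map_mul' _ _ := rfl
  map_zero' := rfl
  map_add' _ _ := rfl
  commutes' _ := rfl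
  map_star' _ := rfl

theorem continuous_compContinuousStarAlgHom (g : C(γ, α)) :
    Continuous (compContinuousStarAlgHom 𝕜 g : (α →ᵇ R) → γ →ᵇ R) :=
  continuous_compContinuous g

end BoundedContinuousFunction

theorem StarSubalgebra.map_topologicalClosure_adjoin_le {R A : Type*} [CommSemiring R]
    [StarRing R] [TopologicalSpace A] [Semiring A] [Algebra R A] [StarRing A] [StarModule R A]
    [IsSemitopologicalSemiring A] [ContinuousStar A] {s : Set A} (φ : A →⋆ₐ[R] A)
    (hφ : Continuous φ) (hs : φ '' s ⊆ s) :
    (StarAlgebra.adjoin R s).topologicalClosure.map φ ≤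
      (StarAlgebra.adjoin R s).topologicalClosure :=
  calc _ ≤ ((StarAlgebra.adjoin R s).map φ).topologicalClosure := map_topologicalClosure_le _ φ hφ
    _ = (StarAlgebra.adjoin R (φ '' s)).topologicalClosure := by rw [StarAlgHom.map_adjoin]
    _ ≤ _ := topologicalClosure_mono (StarAlgebra.adjoin_mono hs)

section Translation

variable {E : Type*} [NormedAddCommGroup E] [InnerProductSpace ℝ E] [FiniteDimensional ℝ E]
  {S : Set (Submodule ℝ E)}

theorem compContinuous_addRight_mem_projGen {u : E →ᵇ ℂ} (hu : u ∈ projGen S) (a : E) :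
    u.compContinuous (ContinuousMap.addRight a) ∈ projGen S := by
  obtain ⟨Y, hY, g, hg, hgu⟩ := hu
  set b := Submodule.orthogonalProjectionOnto Yᗮ a
  refine ⟨Y, hY, g.compContinuous (ContinuousMap.addRight b), hg.comp_add_right b, fun x => ?_⟩
  simp [hgu, b]

theorem compContinuous_addRight_mem_ES {f : E →ᵇ ℂ} (hf : f ∈ ES S) (a : E) :
    f.compContinuous (ContinuousMap.addRight a) ∈ ES S := by
  refine StarSubalgebra.map_topologicalClosure_adjoin_le
    (BoundedContinuousFunction.compContinuousStarAlgHom ℂ (ContinuousMap.addRight a))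
    (BoundedContinuousFunction.continuous_compContinuousStarAlgHom ℂ _) ?_ ⟨f, hf, rfl⟩
  rintro _ ⟨u, hu, rfl⟩
  exact compContinuous_addRight_mem_projGen hu a

end Translation

theorem ES_translation_invariant_general (d : ℕ) (S : Set (Submodule ℝ (X d)))
    (f : BoundedContinuousFunction (X d) ℂ) (hf : f ∈ ES S) (a : X d) :
    ∃ f' ∈ ES S, ∀ x : X d, f' x = f (x + a) :=
  ⟨_, compContinuous_addRight_mem_ES hf a, fun _ => rfl⟩

/-- For any family `S` of linear subspaces of `X`, the algebra `E_S(X)` is invariant under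
translations: if `f ∈ E_S(X)` and `a ∈ X`, then `x ↦ f(x + a)` also belongs to `E_S(X)`. -/
theorem ES_translation_invariant (d : ℕ) (hd : 1 ≤ d) (S : Set (Submodule ℝ (X d)))
    (f : BoundedContinuousFunction (X d) ℂ) (hf : f ∈ ES S) (a : X d) :
    ∃ f' ∈ ES S, ∀ x : X d, f' x = f (x + a) :=
  ES_translation_invariant_general d S f hf a
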